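/- arXiv:1710.03708 — 2 statements merged into one kernel-verified Lean document; each statement's English description precedes it below -/
import Mathlib

section
/- If u : ℝⁿ → ℝ is convex, x⁰ ∈ ℝⁿ, y⁰ ∈ ∂u(x⁰), and ‖u(x) − |x|²/2‖ ≤ η on a ball B(x⁰, ρ) with ρ > η^{1/2}, then for any unit vector e with x⁰ + η^{1/2} e ∈ B(x⁰, ρ), one has (y⁰ − x⁰)·e ≤ (5/2) η^{1/2}. -/
open scoped RealInnerProductSpace

theorem stmt_2 {n : ℕ} (u : EuclideanSpace ℝ (Fin n) → ℝ) (hu : ConvexOn ℝ Set.univ u)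
    (x0 y0 : EuclideanSpace ℝ (Fin n))
    (hsub : ∀ z, u x0 + ⟪y0, z - x0⟫ ≤ u z)
    (η ρ : ℝ) (hη : 0 < η) (hρ : Real.sqrt η < ρ)
    (hclose : ∀ x ∈ Metric.ball x0 ρ, |u x - ‖x‖ ^ 2 / 2| ≤ η)
    (e : EuclideanSpace ℝ (Fin n)) (he : ‖e‖ = 1)
    (hmem : x0 + Real.sqrt η • e ∈ Metric.ball x0 ρ) :
    ⟪y0 - x0, e⟫ ≤ 5 / 2 * Real.sqrt η := by
  set s := Real.sqrt η with hs
  have hspos : 0 < s := Real.sqrt_pos.mpr hη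
  have hs2 : s ^ 2 = η := Real.sq_sqrt hη.le
  have hx0mem : x0 ∈ Metric.ball x0 ρ := by
    simp [Metric.mem_ball]; linarith
  have h1 := hclose _ hx0mem
  have h2 := hclose _ hmem
  have h3 := hsub (x0 + s • e)
  have hinner : ⟪y0, (x0 + s • e) - x0⟫ = s * ⟪y0, e⟫ := by
    rw [add_sub_cancel_left, real_inner_smul_right]
  have hnorm : ‖x0 + s • e‖ ^ 2 = ‖x0‖ ^ 2 + 2 * (s * ⟪x0, e⟫) + s ^ 2 := by
    rw [norm_add_sq_real, real_inner_smul_right, norm_smul, Real.norm_of_nonneg hspos.le,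
      he, mul_one]
  rw [hinner] at h3
  rw [hnorm] at h2
  rw [abs_le] at h1 h2
  have key : s * ⟪y0, e⟫ ≤ s * ⟪x0, e⟫ + s ^ 2 / 2 + 2 * η := by nlinarith [h1.1, h1.2, h2.1, h2.2]
  have : ⟪y0, e⟫ ≤ ⟪x0, e⟫ + 5 / 2 * s := by
    have := (div_le_div_iff_of_pos_right hspos).mpr key
    nlinarith [key]
  rw [inner_sub_left]
  linarith
end

section
/- If u is C² convex with det D²u(x) = f(x)/g(∇u(x)) on the unit square Q, and u⋆ denotes its partial Legendre transform in the e₁-direction, then u⋆ satisfies the linear uniformly elliptic equation f(∂₁u⋆(p,x₂), x₂)·∂₁₁u⋆(p,x₂) + g(p, −∂₂u⋆(p,x₂))·∂₂₂u⋆(p,x₂) = 0 at interior points. -/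
/-! The map `Φ x = (∂₁u x, x₂)` has Jacobian `[[∂₁₁u, ∂₂₁u], [0, 1]]`, invertible by uniform
convexity, so it has a `C¹` local inverse `Y` near `(p, x₂)` with `Y (p, x₂) = (ξ, x₂)`. As
`t ↦ u (t, q₂)` is convex, the supremum defining `u⋆ q` is attained at the first coordinate of
`Y q`, so `u⋆ q = q₁ (Y q)₁ - u (Y q)` near `(p, x₂)`, and the envelope theorem gives
`∇u⋆ q = ((Y q)₁, -∂₂u (Y q))`. Differentiating once more with `DY = (DΦ)⁻¹` yields
`∂₁₁u⋆ = 1 / ∂₁₁u` and `∂₂₂u⋆ = ∂₁₂u ∂₂₁u / ∂₁₁u - ∂₂₂u`, and the Monge–Ampère equation at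
`(ξ, x₂)`, where `∇u = (p, -∂₂u⋆)`, makes `f ∂₁₁u⋆ + g ∂₂₂u⋆` vanish. -/

noncomputable def pt (a b : ℝ) : EuclideanSpace ℝ (Fin 2) :=
  (WithLp.equiv 2 (Fin 2 → ℝ)).symm ![a, b]

def Qbar : Set (EuclideanSpace ℝ (Fin 2)) :=
  {x | x 0 ∈ Set.Icc (0 : ℝ) 1 ∧ x 1 ∈ Set.Icc (0 : ℝ) 1}

/-- mixed second partial derivative `∂ᵥ∂_w u` -/
noncomputable def D2 (u : EuclideanSpace ℝ (Fin 2) → ℝ)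
    (x v w : EuclideanSpace ℝ (Fin 2)) : ℝ :=
  fderiv ℝ (fun y => fderiv ℝ u y w) x v

/-- partial Legendre transform of `u` in the `e₁`-direction -/
noncomputable def pLegendre (u : EuclideanSpace ℝ (Fin 2) → ℝ)
    (q : EuclideanSpace ℝ (Fin 2)) : ℝ :=
  sSup ((fun x₁ => q 0 * x₁ - u (pt x₁ (q 1))) '' Set.Icc (0 : ℝ) 1)

open Set Filter Topology

local notation "ℝ²" => EuclideanSpace ℝ (Fin 2)

@[simp] lemma pt_apply_zero (a b : ℝ) : pt a b 0 = a := rfl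

@[simp] lemma pt_apply_one (a b : ℝ) : pt a b 1 = b := rfl

lemma pt_eta (x : ℝ²) : pt (x 0) (x 1) = x := by
  ext i; fin_cases i <;> rfl

lemma pt_inj {a b c d : ℝ} : pt a b = pt c d ↔ a = c ∧ b = d :=
  ⟨fun h => ⟨congrArg (· 0) h, congrArg (· 1) h⟩, fun ⟨hac, hbd⟩ => hac ▸ hbd ▸ rfl⟩

lemma pt_eq_smul_add (a b : ℝ) : pt a b = a • pt 1 0 + b • pt 0 1 := by
  ext i; fin_cases i <;> simp

lemma map_pt {M F : Type*} [AddCommMonoid M] [Module ℝ M] [FunLike F ℝ² M]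
    [LinearMapClass F ℝ ℝ² M] (L : F) (a b : ℝ) :
    L (pt a b) = a • L (pt 1 0) + b • L (pt 0 1) := by
  rw [pt_eq_smul_add, map_add, map_smul, map_smul]

lemma hasDerivAt_pt_left (s t : ℝ) : HasDerivAt (fun r => pt r s) (pt 1 0) t := by
  rw [show (fun r => pt r s) = fun r => r • pt 1 0 + s • pt 0 1 from
    funext fun r => pt_eq_smul_add r s]
  simpa using ((hasDerivAt_id t).smul_const (pt 1 0)).add_const (s • pt 0 1)

lemma gradient_eq_pt (u : ℝ² → ℝ) (x : ℝ²) :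
    gradient u x = pt (fderiv ℝ u x (pt 1 0)) (fderiv ℝ u x (pt 0 1)) := by
  have hsingle : ∀ i, gradient u x i = fderiv ℝ u x (EuclideanSpace.single i 1) := fun i => by
    rw [← inner_gradient_left, EuclideanSpace.inner_single_right]
    simp
  rw [← pt_eta (gradient u x), hsingle, hsingle]
  congr 2 <;> ext j <;> fin_cases j <;> simp

lemma D2_eq_fderiv_fderiv {u : ℝ² → ℝ} {x : ℝ²} (hu : DifferentiableAt ℝ (fderiv ℝ u) x)
    (v w : ℝ²) : D2 u x v w = fderiv ℝ (fderiv ℝ u) x v w := by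
  rw [D2, fderiv_clm_apply hu (differentiableAt_const w)]
  simp

lemma D2_pt_left (u : ℝ² → ℝ) (x w : ℝ²) (a b : ℝ) :
    D2 u x (pt a b) w = a * D2 u x (pt 1 0) w + b * D2 u x (pt 0 1) w :=
  map_pt (fderiv ℝ (fun y => fderiv ℝ u y w) x) a b

lemma mul_lt_mul_of_forall_quadratic_pos {a b c d : ℝ} (ha : 0 < a)
    (h : ∀ s : ℝ, 0 < a * (s * s) + (b + c) * s + d) : b * c < a * d := by
  have := discrim_lt_zero ha.ne' h
  rw [discrim] at this
  nlinarith [sq_nonneg (b - c)]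

lemma eq_zero_of_det_eq_div {a b c d F G : ℝ} (ha : a ≠ 0) (hdet : c * b < a * d)
    (h : a * d - c * b = F / G) : F * (1 / a) + G * -(-b / a * c + d) = 0 := by
  have hG : G ≠ 0 := fun hG => by
    rw [hG, div_zero] at h
    linarith
  rw [eq_div_iff hG] at h
  field_simp
  linear_combination -h

lemma D2_det_pos {u : ℝ² → ℝ} {x : ℝ²} (hu : DifferentiableAt ℝ (fderiv ℝ u) x)
    (hpd : ∀ v ≠ 0, 0 < D2 u x v v) :
    D2 u x (pt 1 0) (pt 0 1) * D2 u x (pt 0 1) (pt 1 0)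
      < D2 u x (pt 1 0) (pt 1 0) * D2 u x (pt 0 1) (pt 0 1) := by
  have hne : ∀ s : ℝ, pt s 1 ≠ 0 := fun s h => by simpa using congrArg (· 1) h
  have hquad : ∀ s : ℝ, D2 u x (pt s 1) (pt s 1) = D2 u x (pt 1 0) (pt 1 0) * (s * s)
      + (D2 u x (pt 1 0) (pt 0 1) + D2 u x (pt 0 1) (pt 1 0)) * s
      + D2 u x (pt 0 1) (pt 0 1) := fun s => by
    rw [show pt s 1 = s • pt 1 0 + pt 0 1 by simpa using pt_eq_smul_add s 1]
    simp only [D2_eq_fderiv_fderiv hu, map_add, map_smul, add_apply, smul_apply, smul_eq_mul]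
    ring
  refine mul_lt_mul_of_forall_quadratic_pos ?_ fun s => hquad s ▸ hpd _ (hne s)
  simpa using hpd (pt 1 0) fun h => by simpa using congrArg (· 0) h

noncomputable def shear (a b : ℝ) (ha : a ≠ 0) : ℝ² ≃L[ℝ] ℝ² :=
  LinearEquiv.toContinuousLinearEquiv
  { toFun := fun v => pt (a * v 0 + b * v 1) (v 1)
    invFun := fun v => pt ((v 0 - b * v 1) / a) (v 1)
    map_add' := fun v w => by ext i; fin_cases i <;> simp [mul_add, add_add_add_comm]
    map_smul' := fun c v => by ext i; fin_cases i <;> simp [mul_add, mul_left_comm]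
    left_inv := fun v => by
      conv_rhs => rw [← pt_eta v]
      simp only [pt_apply_zero, pt_apply_one]
      congr 1
      field_simp
      ring
    right_inv := fun v => by
      conv_rhs => rw [← pt_eta v]
      simp only [pt_apply_zero, pt_apply_one]
      congr 1
      field_simp
      ring }

lemma shear_apply (a b : ℝ) (ha : a ≠ 0) (v : ℝ²) :
    shear a b ha v = pt (a * v 0 + b * v 1) (v 1) := rfl

lemma shear_symm_apply (a b : ℝ) (ha : a ≠ 0) (v : ℝ²) :
    (shear a b ha).symm v = pt ((v 0 - b * v 1) / a) (v 1) := rfl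

noncomputable def pLegendreMap (u : ℝ² → ℝ) (x : ℝ²) : ℝ² :=
  pt (fderiv ℝ u x (pt 1 0)) (x 1)

section

variable {u : ℝ² → ℝ}

lemma ContDiff.contDiff_fderiv_apply_const (hu : ContDiff ℝ 2 u) (w : ℝ²) :
    ContDiff ℝ 1 (fun y => fderiv ℝ u y w) :=
  (hu.fderiv_right (m := 1) (by norm_num)).clm_apply contDiff_const

lemma ContDiff.hasFDerivAt_fderiv_apply (hu : ContDiff ℝ 2 u) (x w : ℝ²) :
    HasFDerivAt (fun y => fderiv ℝ u y w) (fderiv ℝ (fun y => fderiv ℝ u y w) x) x :=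
  ((hu.contDiff_fderiv_apply_const w).differentiable one_ne_zero x).hasFDerivAt

lemma pLegendre_eq_of_fderiv_eq (hu : ContDiff ℝ 2 u) {q : ℝ²} {ξ : ℝ}
    (hconv : ∀ t ∈ Ioo (0 : ℝ) 1, 0 ≤ D2 u (pt t (q 1)) (pt 1 0) (pt 1 0))
    (hξ : ξ ∈ Ioo (0 : ℝ) 1) (hcrit : fderiv ℝ u (pt ξ (q 1)) (pt 1 0) = q 0) :
    pLegendre u q = q 0 * ξ - u (pt ξ (q 1)) := by
  set φ : ℝ → ℝ := fun t => u (pt t (q 1)) - q 0 * t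
  have hφ' : ∀ t, HasDerivAt φ (fderiv ℝ u (pt t (q 1)) (pt 1 0) - q 0) t := fun t =>
    (((hu.differentiable two_ne_zero _).hasFDerivAt.comp_hasDerivAt t
      (hasDerivAt_pt_left _ t))).sub (by simpa using (hasDerivAt_id t).const_mul (q 0))
  have hφ'' : ∀ t, HasDerivAt (fun t => fderiv ℝ u (pt t (q 1)) (pt 1 0) - q 0)
      (D2 u (pt t (q 1)) (pt 1 0) (pt 1 0)) t := fun t =>
    ((hu.hasFDerivAt_fderiv_apply _ _).comp_hasDerivAt t (hasDerivAt_pt_left _ t)).sub_const _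
  have hφconv : ConvexOn ℝ (Icc 0 1) φ := by
    refine convexOn_of_hasDerivWithinAt2_nonneg (convex_Icc 0 1)
      (fun t _ => (hφ' t).continuousAt.continuousWithinAt)
      (fun t _ => (hφ' t).hasDerivWithinAt) (fun t _ => (hφ'' t).hasDerivWithinAt) ?_
    rwa [interior_Icc]
  have hmin : IsMinOn φ (Icc 0 1) ξ := by
    refine hφconv.isMinOn_of_rightDeriv_eq_zero (by rwa [interior_Icc]) ?_
    rw [(hφ' ξ).hasDerivWithinAt.derivWithin (uniqueDiffWithinAt_Ioi ξ), hcrit, sub_self]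
  refine IsGreatest.csSup_eq ⟨mem_image_of_mem _ (Ioo_subset_Icc_self hξ), ?_⟩
  rintro _ ⟨t, ht, rfl⟩
  have : φ ξ ≤ φ t := hmin ht
  dsimp only [φ] at this ⊢
  linarith

lemma ContDiff.contDiff_pLegendreMap (hu : ContDiff ℝ 2 u) : ContDiff ℝ 1 (pLegendreMap u) := by
  have : pLegendreMap u = fun x => fderiv ℝ u x (pt 1 0) • pt 1 0 + x 1 • pt 0 1 :=
    funext fun x => pt_eq_smul_add _ _
  rw [this]
  exact ((hu.contDiff_fderiv_apply_const _).smul contDiff_const).add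
    ((EuclideanSpace.proj 1 : ℝ² →L[ℝ] ℝ).contDiff.smul contDiff_const)

lemma ContDiff.hasFDerivAt_pLegendreMap (hu : ContDiff ℝ 2 u) (x : ℝ²)
    (ha : D2 u x (pt 1 0) (pt 1 0) ≠ 0) :
    HasFDerivAt (pLegendreMap u)
      (shear (D2 u x (pt 1 0) (pt 1 0)) (D2 u x (pt 0 1) (pt 1 0)) ha : ℝ² →L[ℝ] ℝ²) x := by
  have : pLegendreMap u = fun x => fderiv ℝ u x (pt 1 0) • pt 1 0 + x 1 • pt 0 1 :=
    funext fun x => pt_eq_smul_add _ _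
  rw [this]
  refine (((hu.hasFDerivAt_fderiv_apply x _).smul_const (pt 1 0)).add
    ((EuclideanSpace.proj 1 : ℝ² →L[ℝ] ℝ).hasFDerivAt.smul_const (pt 0 1))).congr_fderiv ?_
  ext1 v
  have hv : fderiv ℝ (fun y => fderiv ℝ u y (pt 1 0)) x v
      = v 0 * D2 u x (pt 1 0) (pt 1 0) + v 1 * D2 u x (pt 0 1) (pt 1 0) := by
    conv_lhs => rw [← pt_eta v]
    exact D2_pt_left u x (pt 1 0) (v 0) (v 1)
  rw [ContinuousLinearEquiv.coe_coe, shear_apply, pt_eq_smul_add (_ * _ + _)]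
  simp [hv, mul_comm]

lemma ContDiff.exists_localInverse_pLegendreMap (hu : ContDiff ℝ 2 u) (x : ℝ²)
    (ha : D2 u x (pt 1 0) (pt 1 0) ≠ 0) :
    ∃ Y : ℝ² → ℝ², Y (pLegendreMap u x) = x ∧
      HasFDerivAt Y
        ((shear (D2 u x (pt 1 0) (pt 1 0)) (D2 u x (pt 0 1) (pt 1 0)) ha).symm : ℝ² →L[ℝ] ℝ²)
        (pLegendreMap u x) ∧
      ∀ᶠ q in 𝓝 (pLegendreMap u x), DifferentiableAt ℝ Y q ∧ pLegendreMap u (Y q) = q := by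
  have hΦ := hu.contDiff_pLegendreMap.contDiffAt (x := x)
  have hΦ' := hu.hasFDerivAt_pLegendreMap x ha
  refine ⟨hΦ.localInverse hΦ' one_ne_zero, hΦ.localInverse_apply_image hΦ' one_ne_zero,
    (hΦ.hasStrictFDerivAt' hΦ' one_ne_zero).to_localInverse.hasFDerivAt, ?_⟩
  filter_upwards [(hΦ.to_localInverse hΦ' one_ne_zero).eventually (by simp),
    (hΦ.hasStrictFDerivAt' hΦ' one_ne_zero).eventually_right_inverse] with q hq hinv
  exact ⟨hq.differentiableAt one_ne_zero, hinv⟩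

lemma pLegendreMap_eq_iff {x q : ℝ²} :
    pLegendreMap u x = q ↔ fderiv ℝ u x (pt 1 0) = q 0 ∧ x 1 = q 1 := by
  rw [pLegendreMap]
  conv_lhs => rw [← pt_eta q]
  exact pt_inj

lemma pLegendre_eventuallyEq (hu : ContDiff ℝ 2 u)
    (hconv : ∀ x ∈ Qbar, 0 ≤ D2 u x (pt 1 0) (pt 1 0)) {Y : ℝ² → ℝ²} {q₀ : ℝ²}
    (hY : ContinuousAt Y q₀) (hq₀ : q₀ 1 ∈ Ioo (0 : ℝ) 1) (hYq₀ : Y q₀ 0 ∈ Ioo (0 : ℝ) 1)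
    (hinv : ∀ᶠ q in 𝓝 q₀, pLegendreMap u (Y q) = q) :
    pLegendre u =ᶠ[𝓝 q₀] fun q => q 0 * Y q 0 - u (Y q) := by
  filter_upwards [hinv,
    (EuclideanSpace.proj 1 : ℝ² →L[ℝ] ℝ).continuous.continuousAt.eventually_mem
      (isOpen_Ioo.mem_nhds hq₀),
    ((EuclideanSpace.proj 0 : ℝ² →L[ℝ] ℝ).continuous.continuousAt.comp hY).eventually_mem
      (isOpen_Ioo.mem_nhds hYq₀)] with q hinvq hq hYq
  obtain ⟨hcrit, hY1⟩ := pLegendreMap_eq_iff.1 hinvq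
  have hYq_eq : Y q = pt (Y q 0) (q 1) := by rw [← hY1, pt_eta]
  rw [hYq_eq] at hcrit ⊢
  exact pLegendre_eq_of_fderiv_eq hu
    (fun t ht => hconv _ ⟨Ioo_subset_Icc_self ht, Ioo_subset_Icc_self hq⟩) hYq hcrit

lemma fderiv_pLegendre_apply (hu : Differentiable ℝ u) {Y : ℝ² → ℝ²} {q : ℝ²}
    (hY : DifferentiableAt ℝ Y q) (hinv : ∀ᶠ q' in 𝓝 q, pLegendreMap u (Y q') = q')
    (hloc : pLegendre u =ᶠ[𝓝 q] fun q' => q' 0 * Y q' 0 - u (Y q')) (v : ℝ²) :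
    fderiv ℝ (pLegendre u) q v = v 0 * Y q 0 - v 1 * fderiv ℝ u (Y q) (pt 0 1) := by
  set L := fderiv ℝ Y q
  have hL1 : ∀ w, L w 1 = w 1 := by
    have hev : (fun q' => Y q' 1) =ᶠ[𝓝 q] fun q' => q' 1 :=
      hinv.mono fun q' h => (pLegendreMap_eq_iff.1 h).2
    have := ((EuclideanSpace.proj 1 : ℝ² →L[ℝ] ℝ).hasFDerivAt.comp q hY.hasFDerivAt).unique
      ((EuclideanSpace.proj 1 : ℝ² →L[ℝ] ℝ).hasFDerivAt.congr_of_eventuallyEq hev)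
    exact fun w => by simpa using congrArg (· w) this
  have hcrit : fderiv ℝ u (Y q) (pt 1 0) = q 0 := (pLegendreMap_eq_iff.1 hinv.self_of_nhds).1
  have hder : HasFDerivAt (fun q' => q' 0 * Y q' 0 - u (Y q'))
      (q 0 • ((EuclideanSpace.proj 0 : ℝ² →L[ℝ] ℝ).comp L)
        + Y q 0 • (EuclideanSpace.proj 0 : ℝ² →L[ℝ] ℝ) - (fderiv ℝ u (Y q)).comp L) q :=
    ((EuclideanSpace.proj 0 : ℝ² →L[ℝ] ℝ).hasFDerivAt.mul
      ((EuclideanSpace.proj 0 : ℝ² →L[ℝ] ℝ).hasFDerivAt.comp q hY.hasFDerivAt)).sub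
      ((hu _).hasFDerivAt.comp q hY.hasFDerivAt)
  rw [hloc.fderiv_eq, hder.fderiv]
  -- envelope theorem: as `∂₁u (Y q) = q₀`, the terms with `∂(Y q)₀` cancel
  have hLv : fderiv ℝ u (Y q) (L v) = L v 0 * q 0 + v 1 * fderiv ℝ u (Y q) (pt 0 1) := by
    conv_lhs => rw [← pt_eta (L v)]
    rw [map_pt, hL1, hcrit, smul_eq_mul, smul_eq_mul]
  simp [hLv]
  ring

lemma D2_pLegendre (hu : ContDiff ℝ 2 u) {Y : ℝ² → ℝ²} {L : ℝ² →L[ℝ] ℝ²} {q : ℝ²}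
    (hY : HasFDerivAt Y L q)
    (hfd : ∀ᶠ q' in 𝓝 q, ∀ v, fderiv ℝ (pLegendre u) q' v
      = v 0 * Y q' 0 - v 1 * fderiv ℝ u (Y q') (pt 0 1)) (v w : ℝ²) :
    D2 (pLegendre u) q v w = w 0 * L v 0 - w 1 * D2 u (Y q) (L v) (pt 0 1) := by
  have hev : (fun q' => fderiv ℝ (pLegendre u) q' w)
      =ᶠ[𝓝 q] fun q' => w 0 * Y q' 0 - w 1 * fderiv ℝ u (Y q') (pt 0 1) :=
    hfd.mono fun q' h => h w
  have hder : HasFDerivAt (fun q' => w 0 * Y q' 0 - w 1 * fderiv ℝ u (Y q') (pt 0 1))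
      (w 0 • (EuclideanSpace.proj 0 : ℝ² →L[ℝ] ℝ).comp L
        - w 1 • (fderiv ℝ (fun y => fderiv ℝ u y (pt 0 1)) (Y q)).comp L) q :=
    (((EuclideanSpace.proj 0 : ℝ² →L[ℝ] ℝ).hasFDerivAt.comp q hY).const_mul (w 0)).sub
      (((hu.hasFDerivAt_fderiv_apply (Y q) (pt 0 1)).comp q hY).const_mul (w 1))
  rw [D2, hev.fderiv_eq, hder.fderiv]
  simp [D2]

end

theorem stmt_13_general (u f g : EuclideanSpace ℝ (Fin 2) → ℝ) (hu : ContDiff ℝ 2 u) (C : ℝ) (hC : 0 < C)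
    (hconv : ∀ x ∈ Qbar, ∀ v : EuclideanSpace ℝ (Fin 2),
      (1 / C) * ‖v‖ ^ 2 ≤ D2 u x v v ∧ D2 u x v v ≤ C * ‖v‖ ^ 2)
    (hMA : ∀ x ∈ Qbar,
      D2 u x (pt 1 0) (pt 1 0) * D2 u x (pt 0 1) (pt 0 1)
        - D2 u x (pt 1 0) (pt 0 1) * D2 u x (pt 0 1) (pt 1 0) = f x / g (gradient u x)) :
    ∀ p x₂ ξ : ℝ, x₂ ∈ Set.Ioo (0 : ℝ) 1 → ξ ∈ Set.Ioo (0 : ℝ) 1 →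
      (∀ t ∈ Set.Icc (0 : ℝ) 1, p * t - u (pt t x₂) ≤ p * ξ - u (pt ξ x₂)) →
      fderiv ℝ u (pt ξ x₂) (pt 1 0) = p →
      f (pt (fderiv ℝ (pLegendre u) (pt p x₂) (pt 1 0)) x₂)
          * D2 (pLegendre u) (pt p x₂) (pt 1 0) (pt 1 0)
        + g (pt p (-(fderiv ℝ (pLegendre u) (pt p x₂) (pt 0 1))))
          * D2 (pLegendre u) (pt p x₂) (pt 0 1) (pt 0 1) = 0 := by
  intro p x₂ ξ hx₂ hξ _ hcrit
  have hpd : ∀ x ∈ Qbar, ∀ v ≠ 0, 0 < D2 u x v v := fun x hx v hv =>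
    lt_of_lt_of_le (by positivity) (hconv x hx v).1
  have he₁ : pt 1 0 ≠ 0 := fun h => by simpa using congrArg (· 0) h
  have hx : pt ξ x₂ ∈ Qbar := ⟨Ioo_subset_Icc_self hξ, Ioo_subset_Icc_self hx₂⟩
  have ha := hpd _ hx _ he₁
  have hdet :=
    D2_det_pos ((hu.fderiv_right (m := 1) le_rfl).differentiable one_ne_zero _) (hpd _ hx)
  obtain ⟨Y, hYx, hY, hYev⟩ := hu.exists_localInverse_pLegendreMap (pt ξ x₂) ha.ne'
  rw [(pLegendreMap_eq_iff (q := pt p x₂)).2 ⟨hcrit, rfl⟩] at hYx hY hYev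
  have hloc := pLegendre_eventuallyEq hu (fun x hx => (hpd x hx _ he₁).le) hY.continuousAt
    hx₂ (by rwa [hYx]) (hYev.mono fun _ h => h.2)
  have hfd : ∀ᶠ q in 𝓝 (pt p x₂), ∀ v, fderiv ℝ (pLegendre u) q v
      = v 0 * Y q 0 - v 1 * fderiv ℝ u (Y q) (pt 0 1) := by
    filter_upwards [hYev, hYev.eventually_nhds, hloc.eventuallyEq_nhds] with q hq hinv hlocq
    exact fderiv_pLegendre_apply (hu.differentiable two_ne_zero) hq.1
      (hinv.mono fun _ h => h.2) hlocq
  rw [hfd.self_of_nhds, hfd.self_of_nhds, D2_pLegendre hu hY hfd, D2_pLegendre hu hY hfd, hYx]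
  simp only [ContinuousLinearEquiv.coe_coe, shear_symm_apply, pt_apply_zero, pt_apply_one,
    one_mul, zero_mul, mul_zero, mul_one, sub_zero, zero_sub, neg_neg]
  rw [D2_pt_left u _ (pt 0 1) (-_ / _) 1, one_mul]
  have hMAx := hMA _ hx
  rw [gradient_eq_pt, hcrit] at hMAx
  exact eq_zero_of_det_eq_div ha.ne' hdet hMAx

theorem stmt_13 (u f g : EuclideanSpace ℝ (Fin 2) → ℝ) (hu : ContDiff ℝ 2 u) (C : ℝ) (hC : 0 < C)
    (hconv : ∀ x ∈ Qbar, ∀ v : EuclideanSpace ℝ (Fin 2),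
      (1 / C) * ‖v‖ ^ 2 ≤ D2 u x v v ∧ D2 u x v v ≤ C * ‖v‖ ^ 2)
    (hfg : ContinuousOn f Qbar ∧ ContinuousOn g Qbar ∧
      (∀ x ∈ Qbar, 0 < f x) ∧ ∀ y ∈ Qbar, 0 < g y)
    (hMA : ∀ x ∈ Qbar,
      D2 u x (pt 1 0) (pt 1 0) * D2 u x (pt 0 1) (pt 0 1)
        - D2 u x (pt 1 0) (pt 0 1) * D2 u x (pt 0 1) (pt 1 0) = f x / g (gradient u x)) :
    ∀ p x₂ ξ : ℝ, x₂ ∈ Set.Ioo (0 : ℝ) 1 → ξ ∈ Set.Ioo (0 : ℝ) 1 →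
      (∀ t ∈ Set.Icc (0 : ℝ) 1, p * t - u (pt t x₂) ≤ p * ξ - u (pt ξ x₂)) →
      fderiv ℝ u (pt ξ x₂) (pt 1 0) = p →
      f (pt (fderiv ℝ (pLegendre u) (pt p x₂) (pt 1 0)) x₂)
          * D2 (pLegendre u) (pt p x₂) (pt 1 0) (pt 1 0)
        + g (pt p (-(fderiv ℝ (pLegendre u) (pt p x₂) (pt 0 1))))
          * D2 (pLegendre u) (pt p x₂) (pt 0 1) (pt 0 1) = 0 :=
  stmt_13_general u f g hu C hC hconv hMA
end
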